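/- arXiv:2510.02775 — 5 statements merged into one kernel-verified Lean document; each statement's English description precedes it below -/
import Mathlib

section
/- If $x_1,\dots,x_n$ are real numbers with $0 \le x_j \le 1$ for each $j$, then $\sum_{j=1}^n \frac{1-x_j}{1+x_j} \ge \frac{1-\prod_{j=1}^n x_j}{1+\prod_{j=1}^n x_j}$. -/
/-! With `f t = (1 - t) / (1 + t)`, the inequality `f (a * b) ≤ f a + f b` on `[0, 1]` gives the
theorem by induction on the number of factors. -/

open Finset

lemma one_sub_mul_div_one_add_mul_le {a b : ℝ} (ha₀ : 0 ≤ a) (ha₁ : a ≤ 1) (hb₀ : 0 ≤ b)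
    (hb₁ : b ≤ 1) :
    (1 - a * b) / (1 + a * b) ≤ (1 - a) / (1 + a) + (1 - b) / (1 + b) := by
  have hab₁ : a * b ≤ 1 := mul_le_one₀ ha₁ hb₀ hb₁
  have hprod : 0 ≤ (1 - a * b) * ((1 - a) * (1 - b)) :=
    mul_nonneg (by linarith) (mul_nonneg (by linarith) (by linarith))
  -- `f a + f b = 2 (1 - a b) / ((1 + a) (1 + b))`, and `(1 + a) (1 + b) ≤ 2 (1 + a b)`
  -- is `0 ≤ (1 - a) (1 - b)`.
  calc (1 - a * b) / (1 + a * b) ≤ 2 * (1 - a * b) / ((1 + a) * (1 + b)) := by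
        rw [div_le_div_iff₀ (by positivity) (by positivity)]
        nlinarith
    _ = (1 - a) / (1 + a) + (1 - b) / (1 + b) := by
        field_simp
        ring

lemma Finset.one_sub_prod_div_one_add_prod_le_sum {ι : Type*} (s : Finset ι) {x : ι → ℝ}
    (hx : ∀ j ∈ s, 0 ≤ x j ∧ x j ≤ 1) :
    (1 - ∏ j ∈ s, x j) / (1 + ∏ j ∈ s, x j) ≤ ∑ j ∈ s, (1 - x j) / (1 + x j) := by
  induction s using Finset.cons_induction with
  | empty => simp
  | cons a s ha ih =>
    have hxs : ∀ j ∈ s, 0 ≤ x j ∧ x j ≤ 1 := fun j hj => hx j (mem_cons_of_mem hj)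
    obtain ⟨hxa₀, hxa₁⟩ := hx a (mem_cons_self a s)
    rw [prod_cons, sum_cons]
    calc (1 - x a * ∏ j ∈ s, x j) / (1 + x a * ∏ j ∈ s, x j)
        ≤ (1 - x a) / (1 + x a) + (1 - ∏ j ∈ s, x j) / (1 + ∏ j ∈ s, x j) :=
          one_sub_mul_div_one_add_mul_le hxa₀ hxa₁
            (prod_nonneg fun j hj => (hxs j hj).1)
            (prod_le_one (fun j hj => (hxs j hj).1) fun j hj => (hxs j hj).2)
      _ ≤ (1 - x a) / (1 + x a) + ∑ j ∈ s, (1 - x j) / (1 + x j) := by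
          gcongr
          exact ih hxs

theorem stmt_0_general (n : ℕ) (x : Fin n → ℝ)
    (hx : ∀ j, 0 ≤ x j ∧ x j ≤ 1) :
    (1 - ∏ j, x j) / (1 + ∏ j, x j) ≤ ∑ j, (1 - x j) / (1 + x j) :=
  univ.one_sub_prod_div_one_add_prod_le_sum fun j _ => hx j

theorem stmt_0 (n : ℕ) (hn : 0 < n) (x : Fin n → ℝ)
    (hx : ∀ j, 0 ≤ x j ∧ x j ≤ 1) :
    (1 - ∏ j, x j) / (1 + ∏ j, x j) ≤ ∑ j, (1 - x j) / (1 + x j) :=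
  stmt_0_general n x hx
end

section
/- If $P(z)$ is a complex polynomial of degree $n \ge 1$ all of whose zeros lie in the disk $|z| \le k$ with $k \ge 1$, then $\max_{|z|=k} |P(z)| \ge \frac{2k^n}{1+k^n} \max_{|z|=1} |P(z)|$. -/
/-!
Put `Q(z) = zⁿ P(k / z)`. Its zeros `k / a` lie outside the open unit disc, `max_{|z|=k} |Q|`
equals `kⁿ max_{|z|=1} |P|` and `max_{|z|=1} |Q|` equals `max_{|z|=k} |P|`, so the claim is the
Ankeny–Rivlin inequality `max_{|z|=R} |Q| ≤ (Rⁿ + 1) / 2 · max_{|z|=1} |Q|` at `R = k`.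

Ankeny–Rivlin follows by integrating the Erdős–Lax bound `|Q'| ≤ n / 2 · max_{|z|=1} |Q|` along
rays, using Bernstein's growth bound `|Q'(z)| ≤ max_{|w|=1} |Q'| · |z|ⁿ⁻¹` for `|z| ≥ 1`.
Erdős–Lax combines two estimates on the unit circle for the polar derivative
`n p(z) - z p'(z)`: it dominates `|z p'(z)|` when `p` has no zeros in the open disc, and
`|p'(z)| + |n p(z) - z p'(z)| ≤ n max_{|w|=1} |p|` in general. Both come from writing
`z p'(z) / p(z) = Σ_a z / (z - a)` and comparing `Re (z / (z - a))` with `1 / 2`; the second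
applies this to `p - c zⁿ`, `|c| > max |p|`, whose zeros lie in the disc and whose polar
derivative is that of `p`.
-/

open Polynomial

namespace Complex

theorem two_mul_re_div_sub_sub_one {z a : ℂ} (h : z ≠ a) :
    2 * (z / (z - a)).re - 1 = (‖z‖ ^ 2 - ‖a‖ ^ 2) / ‖z - a‖ ^ 2 := by
  have : ‖z - a‖ ≠ 0 := norm_ne_zero_iff.mpr (sub_ne_zero.mpr h)
  rw [div_re, ← add_div, normSq_eq_norm_sq]
  field_simp
  simp only [Complex.sq_norm, normSq_apply, sub_re, sub_im]
  ring

theorem two_mul_re_sum_div_sub (m : Multiset ℂ) (z : ℂ) :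
    2 * (m.map fun a => z / (z - a)).sum.re = (m.map fun a => 2 * (z / (z - a)).re).sum := by
  induction m using Multiset.induction_on with
  | empty => simp
  | cons a m ih => simp only [Multiset.map_cons, Multiset.sum_cons, add_re, mul_add, ih]

theorem norm_ofReal_sub_sq (c : ℝ) (S : ℂ) :
    ‖(c : ℂ) - S‖ ^ 2 = ‖S‖ ^ 2 + c * (c - 2 * S.re) := by
  simp only [Complex.sq_norm, normSq_apply, sub_re, sub_im, ofReal_re, ofReal_im]
  ring

theorem norm_add_norm_le_of_forall_lt_norm {A B : ℂ} {R : ℝ} (hA : ‖A‖ ≤ R)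
    (h : ∀ w : ℂ, R < ‖w‖ → ‖B‖ ≤ ‖A - w‖) : ‖A‖ + ‖B‖ ≤ R := by
  refine le_of_forall_gt_imp_ge_of_dense fun t ht => ?_
  set u := exp (A.arg * I)
  have hu : ‖u‖ = 1 := norm_exp_ofReal_mul_I _
  have ht0 : 0 ≤ t := (norm_nonneg A).trans (hA.trans ht.le)
  -- `t u` points in the direction of `A`, so `‖A - t u‖ = t - ‖A‖`.
  have hB := h (t * u) (by rwa [norm_mul, hu, mul_one, norm_real, Real.norm_of_nonneg ht0])
  rw [← norm_mul_exp_arg_mul_I A, ← sub_mul, norm_mul, hu, mul_one, ← ofReal_sub, norm_real,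
    Real.norm_eq_abs, abs_sub_comm, abs_of_nonneg (by linarith)] at hB
  linarith

end Complex

namespace Polynomial

noncomputable def maxModulus (p : ℂ[X]) (r : ℝ) : ℝ :=
  ⨆ z : Metric.sphere (0 : ℂ) r, ‖p.eval (z : ℂ)‖

section maxModulus

variable (p : ℂ[X]) {r : ℝ} {z : ℂ}

theorem norm_eval_le_maxModulus (hz : ‖z‖ = r) : ‖p.eval z‖ ≤ maxModulus p r := by
  have hbdd : BddAbove (Set.range fun w : Metric.sphere (0 : ℂ) r => ‖p.eval (w : ℂ)‖) := by
    simpa only [Set.image_eq_range] using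
      ((isCompact_sphere (0 : ℂ) r).image p.continuous.norm).bddAbove
  exact le_ciSup hbdd ⟨z, mem_sphere_zero_iff_norm.mpr hz⟩

theorem maxModulus_le {C : ℝ} (hr : 0 ≤ r) (h : ∀ z : ℂ, ‖z‖ = r → ‖p.eval z‖ ≤ C) :
    maxModulus p r ≤ C :=
  have : Nonempty (Metric.sphere (0 : ℂ) r) := (NormedSpace.sphere_nonempty.mpr hr).coe_sort
  ciSup_le fun w => h w (mem_sphere_zero_iff_norm.mp w.2)

theorem norm_eval_le_maxModulus_of_norm_le (hr : 0 < r) (hz : ‖z‖ ≤ r) :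
    ‖p.eval z‖ ≤ maxModulus p r := by
  refine Complex.norm_le_of_forall_mem_frontier_norm_le (U := Metric.ball 0 r)
    Metric.isBounded_ball p.differentiable.diffContOnCl (fun w hw => ?_) ?_
  · rw [frontier_ball 0 hr.ne'] at hw
    exact norm_eval_le_maxModulus p (mem_sphere_zero_iff_norm.mp hw)
  · rwa [closure_ball 0 hr.ne', mem_closedBall_zero_iff]

end maxModulus

section reflect

theorem eval_reflect {K : Type*} [Field K] {p : K[X]} {N : ℕ} (hp : p.natDegree ≤ N) {z : K}
    (hz : z ≠ 0) : (reflect N p).eval z = z ^ N * p.eval z⁻¹ := by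
  let := invertibleOfNonzero (inv_ne_zero hz)
  have := eval₂_reflect_mul_pow (RingHom.id K) z⁻¹ N p hp
  simp only [invOf_eq_inv, inv_inv, eval₂_id] at this
  rw [← this, mul_left_comm, ← mul_pow, mul_inv_cancel₀ hz, one_pow, mul_one]

theorem eval_zero_reflect {R : Type*} [Semiring R] (p : R[X]) (N : ℕ) :
    (reflect N p).eval 0 = p.coeff N := by
  rw [← coeff_zero_eq_eval_zero, coeff_reflect, revAt_zero]

theorem natDegree_comp_C_mul_X_le {R : Type*} [Semiring R] (p : R[X]) (c : R) :
    (p.comp (C c * X)).natDegree ≤ p.natDegree :=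
  natDegree_le_iff_coeff_eq_zero.mpr fun i hi => by
    rw [comp_C_mul_X_coeff, coeff_eq_zero_of_natDegree_lt hi, zero_mul]

theorem eval_reflect_comp_C_mul_X {K : Type*} [Field K] {p : K[X]} {n : ℕ}
    (hp : p.natDegree ≤ n) (c : K) {z : K} (hz : z ≠ 0) :
    (reflect n (p.comp (C c * X))).eval z = z ^ n * p.eval (c / z) := by
  rw [eval_reflect ((natDegree_comp_C_mul_X_le p c).trans hp) hz, eval_comp, eval_mul, eval_C,
    eval_X, div_eq_mul_inv]

end reflect

section growth

variable (p : ℂ[X]) {n : ℕ}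

theorem norm_eval_reflect_le_maxModulus_one (hp : p.natDegree ≤ n) {w : ℂ} (hw : ‖w‖ ≤ 1) :
    ‖(reflect n p).eval w‖ ≤ maxModulus p 1 := by
  refine (norm_eval_le_maxModulus_of_norm_le _ one_pos hw).trans
    (maxModulus_le _ zero_le_one fun z hz => ?_)
  have hz0 : z ≠ 0 := norm_ne_zero_iff.mp (by rw [hz]; exact one_ne_zero)
  rw [eval_reflect hp hz0, norm_mul, norm_pow, hz, one_pow, one_mul]
  exact norm_eval_le_maxModulus p (by rw [norm_inv, hz, inv_one])

theorem norm_eval_le_maxModulus_one_mul_pow (hp : p.natDegree ≤ n) {z : ℂ} (hz : 1 ≤ ‖z‖) :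
    ‖p.eval z‖ ≤ maxModulus p 1 * ‖z‖ ^ n := by
  have hz0 : z ≠ 0 := norm_pos_iff.mp (one_pos.trans_le hz)
  have h := norm_eval_reflect_le_maxModulus_one p hp (w := z⁻¹)
    (by rw [norm_inv]; exact inv_le_one_of_one_le₀ hz)
  rwa [eval_reflect hp (inv_ne_zero hz0), inv_inv, norm_mul, norm_pow, norm_inv, inv_pow,
    inv_mul_le_iff₀ (by positivity), mul_comm] at h

theorem norm_coeff_le_maxModulus_one (hp : p.natDegree ≤ n) : ‖p.coeff n‖ ≤ maxModulus p 1 := by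
  simpa only [eval_zero_reflect] using norm_eval_reflect_le_maxModulus_one p hp (w := 0) (by simp)

end growth

theorem X_mul_derivative_C_mul_X_pow {R : Type*} [CommSemiring R] (c : R) (n : ℕ) :
    X * derivative (C c * X ^ n) = n • (C c * X ^ n) := by
  rw [derivative_C_mul_X_pow]
  cases n with
  | zero => simp
  | succ m => simp only [nsmul_eq_mul, C_mul, map_natCast, pow_succ, Nat.add_sub_cancel]; ring

/-- The polar derivative of `p` with respect to `0`, `p` being regarded as of degree `n`. -/
noncomputable def polarDeriv {R : Type*} [CommRing R] (n : ℕ) (p : R[X]) : R[X] :=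
  n • p - X * derivative p

section polarDeriv

variable {R : Type*} [CommRing R] (n : ℕ) (p : R[X])

theorem eval_polarDeriv (z : R) :
    (polarDeriv n p).eval z = n * p.eval z - z * (derivative p).eval z := by
  simp [polarDeriv, nsmul_eq_mul]

theorem polarDeriv_sub_C_mul_X_pow (c : R) :
    polarDeriv n (p - C c * X ^ n) = polarDeriv n p := by
  rw [polarDeriv, polarDeriv, derivative_sub, mul_sub, X_mul_derivative_C_mul_X_pow, smul_sub]
  abel

end polarDeriv

section turan

variable {p : ℂ[X]} {n : ℕ} {z : ℂ}

theorem eval_mul_derivative_eq_mul_sum (hz : p.eval z ≠ 0) :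
    z * (derivative p).eval z = p.eval z * (p.roots.map fun a => z / (z - a)).sum := by
  rw [(IsAlgClosed.splits p).eval_derivative_eq_eval_mul_sum hz, mul_left_comm,
    ← Multiset.sum_map_mul_left]
  simp only [mul_one_div]

theorem norm_eval_polarDeriv_sq (hz : p.eval z ≠ 0) :
    ‖(polarDeriv n p).eval z‖ ^ 2 = ‖z * (derivative p).eval z‖ ^ 2 +
      ‖p.eval z‖ ^ 2 * (n * (n - 2 * (p.roots.map fun a => z / (z - a)).sum.re)) := by
  rw [eval_polarDeriv, eval_mul_derivative_eq_mul_sum hz, mul_comm (n : ℂ), ← mul_sub, norm_mul,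
    norm_mul, mul_pow, mul_pow, ← Complex.ofReal_natCast, Complex.norm_ofReal_sub_sq]
  ring

theorem ne_of_mem_roots_of_eval_ne_zero (hz : p.eval z ≠ 0) {a : ℂ} (ha : a ∈ p.roots) :
    z ≠ a := by
  rintro rfl
  exact hz (mem_roots'.mp ha).2

theorem norm_eval_polarDeriv_le (hp : p.natDegree = n) (hroots : ∀ a ∈ p.roots, ‖a‖ ≤ ‖z‖) :
    ‖(polarDeriv n p).eval z‖ ≤ ‖z * (derivative p).eval z‖ := by
  by_cases hz : p.eval z = 0
  · simp [eval_polarDeriv, hz]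
  have hre : (n : ℝ) ≤ 2 * (p.roots.map fun a => z / (z - a)).sum.re := by
    rw [Complex.two_mul_re_sum_div_sub]
    have h := Multiset.card_nsmul_le_sum (s := p.roots.map fun a => 2 * (z / (z - a)).re) (a := 1)
    rw [Multiset.card_map, IsAlgClosed.card_roots_eq_natDegree, hp, nsmul_one] at h
    refine h fun x hx => ?_
    obtain ⟨a, ha, rfl⟩ := Multiset.mem_map.mp hx
    have hsign := Complex.two_mul_re_div_sub_sub_one (ne_of_mem_roots_of_eval_ne_zero hz ha)
    have : 0 ≤ (‖z‖ ^ 2 - ‖a‖ ^ 2) / ‖z - a‖ ^ 2 :=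
      div_nonneg (sub_nonneg.mpr (pow_le_pow_left₀ (norm_nonneg _) (hroots a ha) 2)) (sq_nonneg _)
    linarith
  refine (sq_le_sq₀ (norm_nonneg _) (norm_nonneg _)).mp ?_
  rw [norm_eval_polarDeriv_sq hz]
  nlinarith [sq_nonneg ‖p.eval z‖, mul_nonpos_of_nonneg_of_nonpos (Nat.cast_nonneg (α := ℝ) n)
    (sub_nonpos.mpr hre)]

theorem norm_mul_eval_derivative_le (hp : p.natDegree ≤ n)
    (hroots : ∀ a ∈ p.roots, ‖z‖ ≤ ‖a‖) :
    ‖z * (derivative p).eval z‖ ≤ ‖(polarDeriv n p).eval z‖ := by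
  by_cases hz : p.eval z = 0
  · simp [eval_polarDeriv, hz]
  have hre : 2 * (p.roots.map fun a => z / (z - a)).sum.re ≤ n := by
    rw [Complex.two_mul_re_sum_div_sub]
    have h := Multiset.sum_le_card_nsmul (p.roots.map fun a => 2 * (z / (z - a)).re) 1
    rw [Multiset.card_map, IsAlgClosed.card_roots_eq_natDegree, nsmul_one] at h
    refine (h fun x hx => ?_).trans (by exact_mod_cast hp)
    obtain ⟨a, ha, rfl⟩ := Multiset.mem_map.mp hx
    have hsign := Complex.two_mul_re_div_sub_sub_one (ne_of_mem_roots_of_eval_ne_zero hz ha)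
    have : (‖z‖ ^ 2 - ‖a‖ ^ 2) / ‖z - a‖ ^ 2 ≤ 0 :=
      div_nonpos_of_nonpos_of_nonneg
        (sub_nonpos.mpr (pow_le_pow_left₀ (norm_nonneg _) (hroots a ha) 2)) (sq_nonneg _)
    linarith
  refine (sq_le_sq₀ (norm_nonneg _) (norm_nonneg _)).mp ?_
  rw [norm_eval_polarDeriv_sq hz]
  nlinarith [sq_nonneg ‖p.eval z‖, mul_nonneg (Nat.cast_nonneg (α := ℝ) n) (sub_nonneg.mpr hre)]

end turan

section bernstein

variable {p : ℂ[X]} {n : ℕ} {z c : ℂ}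

theorem natDegree_sub_C_mul_X_pow (hp : p.natDegree ≤ n) (hc : maxModulus p 1 < ‖c‖) :
    (p - C c * X ^ n).natDegree = n := by
  refine le_antisymm ((natDegree_sub_le _ _).trans (max_le hp (natDegree_C_mul_X_pow_le c n)))
    (le_natDegree_of_ne_zero ?_)
  rw [coeff_sub, coeff_C_mul_X_pow, if_pos rfl, sub_ne_zero]
  rintro rfl
  exact (norm_coeff_le_maxModulus_one p hp).not_gt hc

theorem norm_lt_one_of_mem_roots_sub_C_mul_X_pow (hp : p.natDegree ≤ n)
    (hc : maxModulus p 1 < ‖c‖) {a : ℂ} (ha : a ∈ (p - C c * X ^ n).roots) : ‖a‖ < 1 := by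
  by_contra! h
  have hpa : p.eval a = c * a ^ n := by
    simpa [sub_eq_zero] using (mem_roots'.mp ha).2
  have hgrowth := norm_eval_le_maxModulus_one_mul_pow p hp h
  rw [hpa, norm_mul, norm_pow] at hgrowth
  have : 0 < ‖a‖ ^ n := pow_pos (one_pos.trans_le h) n
  nlinarith

theorem norm_eval_polarDeriv_le_norm_sub (hp : p.natDegree ≤ n) (hz : ‖z‖ = 1)
    (hc : maxModulus p 1 < ‖c‖) :
    ‖(polarDeriv n p).eval z‖ ≤ ‖z * (derivative p).eval z - n * c * z ^ n‖ := by
  have h := norm_eval_polarDeriv_le (natDegree_sub_C_mul_X_pow hp hc) fun a ha =>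
    hz ▸ (norm_lt_one_of_mem_roots_sub_C_mul_X_pow hp hc ha).le
  rw [polarDeriv_sub_C_mul_X_pow] at h
  convert h using 2
  have := congrArg (eval z) (X_mul_derivative_C_mul_X_pow c n)
  simp only [eval_mul, eval_X, eval_C, eval_pow, eval_natCast, nsmul_eq_mul] at this
  simp only [derivative_sub, eval_sub, mul_sub, this]
  ring

theorem norm_eval_derivative_add_norm_eval_polarDeriv_le (hp : p.natDegree ≤ n) (hz : ‖z‖ = 1) :
    ‖(derivative p).eval z‖ + ‖(polarDeriv n p).eval z‖ ≤ n * maxModulus p 1 := by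
  rcases n.eq_zero_or_pos with rfl | hn
  · simp [eval_polarDeriv, derivative_of_natDegree_zero (Nat.le_zero.mp hp)]
  have hz0 : z ≠ 0 := norm_ne_zero_iff.mp (by rw [hz]; exact one_ne_zero)
  have hA : ‖z * (derivative p).eval z‖ = ‖(derivative p).eval z‖ := by
    rw [norm_mul, hz, one_mul]
  have key : ∀ w : ℂ, n * maxModulus p 1 < ‖w‖ →
      ‖(polarDeriv n p).eval z‖ ≤ ‖z * (derivative p).eval z - w‖ := fun w hw => by
    have hn' : (n : ℂ) ≠ 0 := Nat.cast_ne_zero.mpr hn.ne'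
    convert norm_eval_polarDeriv_le_norm_sub hp hz (c := w / (n * z ^ n)) ?_ using 3
    · field_simp
    · rwa [norm_div, norm_mul, norm_pow, hz, Complex.norm_natCast, one_pow, mul_one,
        lt_div_iff₀ (by positivity), mul_comm]
  rw [← hA]
  refine Complex.norm_add_norm_le_of_forall_lt_norm ?_ key
  by_contra! hlt
  have hB := key _ hlt
  rw [sub_self, norm_zero, norm_le_zero_iff, eval_polarDeriv, sub_eq_zero] at hB
  rw [← hB, norm_mul, Complex.norm_natCast] at hlt
  exact hlt.not_ge (mul_le_mul_of_nonneg_left (norm_eval_le_maxModulus p hz) n.cast_nonneg)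

end bernstein

section roots_outside_disc

variable {p : ℂ[X]} {n : ℕ}

theorem maxModulus_derivative_le (hp : p.natDegree ≤ n) (hroots : ∀ a ∈ p.roots, 1 ≤ ‖a‖) :
    maxModulus (derivative p) 1 ≤ n / 2 * maxModulus p 1 := by
  refine maxModulus_le _ zero_le_one fun z hz => ?_
  have hle := norm_mul_eval_derivative_le hp fun a ha => hz ▸ hroots a ha
  have hsum := norm_eval_derivative_add_norm_eval_polarDeriv_le hp hz
  rw [norm_mul, hz, one_mul] at hle
  linarith

theorem maxModulus_le_pow_add_one_div_two_mul (hp : p.natDegree ≤ n)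
    (hroots : ∀ a ∈ p.roots, 1 ≤ ‖a‖) {R : ℝ} (hR : 1 ≤ R) :
    maxModulus p R ≤ (R ^ n + 1) / 2 * maxModulus p 1 := by
  have hR0 : 0 < R := one_pos.trans_le hR
  refine maxModulus_le p hR0.le fun w hw => ?_
  set M := maxModulus p 1
  set ω := w / R
  have hω : ‖ω‖ = 1 := by
    rw [norm_div, hw, Complex.norm_real, Real.norm_of_nonneg hR0.le, div_self hR0.ne']
  have hf (t : ℝ) :
      HasDerivAt (fun s : ℝ => p.eval (s * ω)) (ω * (derivative p).eval (t * ω)) t := by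
    simpa [mul_comm] using
      ((p.hasDerivAt (t * ω)).comp (t : ℂ) ((hasDerivAt_id (t : ℂ)).mul_const ω)).comp_ofReal
  have hB (t : ℝ) :
      HasDerivAt (fun s : ℝ => (s ^ n + 1) / 2 * M) (n * t ^ (n - 1) / 2 * M) t :=
    (((hasDerivAt_pow n t).add_const 1).div_const 2).mul_const M
  have hdeg' : (derivative p).natDegree ≤ n - 1 :=
    (natDegree_derivative_le p).trans (Nat.sub_le_sub_right hp 1)
  have hbound : ∀ t ∈ Set.Ico 1 R,
      ‖ω * (derivative p).eval (t * ω)‖ ≤ n * t ^ (n - 1) / 2 * M := by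
    intro t ht
    have htω : ‖(t : ℂ) * ω‖ = t := by
      rw [norm_mul, hω, mul_one, Complex.norm_real, Real.norm_of_nonneg (by linarith [ht.1])]
    rw [norm_mul, hω, one_mul]
    calc ‖(derivative p).eval (t * ω)‖ ≤ maxModulus (derivative p) 1 * t ^ (n - 1) := by
          simpa only [htω] using norm_eval_le_maxModulus_one_mul_pow _ hdeg' (htω.ge.trans' ht.1)
      _ ≤ n / 2 * M * t ^ (n - 1) := by
          gcongr
          · exact pow_nonneg (by linarith [ht.1]) _
          · exact maxModulus_derivative_le hp hroots
      _ = n * t ^ (n - 1) / 2 * M := by ring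
  have h := image_norm_le_of_norm_deriv_right_le_deriv_boundary
    (fun t _ => (hf t).continuousAt.continuousWithinAt) (fun t _ => (hf t).hasDerivWithinAt)
    (by simpa [one_add_one_eq_two] using norm_eval_le_maxModulus p hω) hB hbound
    (Set.right_mem_Icc.mpr hR)
  rwa [mul_div_cancel₀ w (Complex.ofReal_ne_zero.mpr hR0.ne')] at h

end roots_outside_disc

section inversion

variable {P : ℂ[X]} {n : ℕ} {k : ℝ}

theorem one_le_norm_of_mem_roots_reflect_comp (hk : 0 < k) (hP : P.natDegree = n)
    (hzeros : ∀ z : ℂ, P.IsRoot z → ‖z‖ ≤ k) {a : ℂ}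
    (ha : a ∈ (reflect n (P.comp (C (k : ℂ) * X))).roots) : 1 ≤ ‖a‖ := by
  obtain ⟨hQ0, hroot⟩ := mem_roots'.mp ha
  rcases eq_or_ne a 0 with rfl | ha0
  · have hP0 : P ≠ 0 := by rintro rfl; simp at hQ0
    rw [IsRoot, eval_zero_reflect, comp_C_mul_X_coeff, ← hP] at hroot
    exact absurd hroot (mul_ne_zero (leadingCoeff_ne_zero.mpr hP0)
      (pow_ne_zero _ (Complex.ofReal_ne_zero.mpr hk.ne')))
  rw [IsRoot, eval_reflect_comp_C_mul_X hP.le _ ha0] at hroot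
  have hka := hzeros _ ((mul_eq_zero.mp hroot).resolve_left (pow_ne_zero _ ha0))
  rw [norm_div, Complex.norm_real, Real.norm_of_nonneg hk.le,
    div_le_iff₀ (norm_pos_iff.mpr ha0)] at hka
  nlinarith

theorem pow_mul_maxModulus_one_le_maxModulus_reflect_comp (hk : 0 < k) (hP : P.natDegree ≤ n) :
    k ^ n * maxModulus P 1 ≤ maxModulus (reflect n (P.comp (C (k : ℂ) * X))) k := by
  rw [← le_div_iff₀' (by positivity)]
  refine maxModulus_le P zero_le_one fun v hv => ?_
  have hv0 : v ≠ 0 := norm_ne_zero_iff.mp (by rw [hv]; exact one_ne_zero)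
  have hk0 : (k : ℂ) ≠ 0 := Complex.ofReal_ne_zero.mpr hk.ne'
  have hnorm : ‖(k : ℂ) / v‖ = k := by
    rw [norm_div, hv, div_one, Complex.norm_real, Real.norm_of_nonneg hk.le]
  have h := norm_eval_le_maxModulus (reflect n (P.comp (C (k : ℂ) * X))) hnorm
  rw [eval_reflect_comp_C_mul_X hP _ (div_ne_zero hk0 hv0), div_div_cancel₀ hk0, norm_mul,
    norm_pow, hnorm] at h
  rwa [le_div_iff₀' (by positivity)]

theorem maxModulus_reflect_comp_one_le (hk : 0 < k) (hP : P.natDegree ≤ n) :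
    maxModulus (reflect n (P.comp (C (k : ℂ) * X))) 1 ≤ maxModulus P k := by
  refine maxModulus_le _ zero_le_one fun z hz => ?_
  have hz0 : z ≠ 0 := norm_ne_zero_iff.mp (by rw [hz]; exact one_ne_zero)
  rw [eval_reflect_comp_C_mul_X hP _ hz0, norm_mul, norm_pow, hz, one_pow, one_mul]
  exact norm_eval_le_maxModulus P (by rw [norm_div, hz, div_one, Complex.norm_real,
    Real.norm_of_nonneg hk.le])

end inversion

end Polynomial

theorem stmt_2_general (P : Polynomial ℂ) (n : ℕ) (hdeg : P.natDegree = n)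
    (k : ℝ) (hk : 1 ≤ k) (hzeros : ∀ z : ℂ, P.IsRoot z → ‖z‖ ≤ k) :
    (2 * k ^ n / (1 + k ^ n)) * (⨆ z : Metric.sphere (0 : ℂ) 1, ‖P.eval (z : ℂ)‖) ≤
      ⨆ z : Metric.sphere (0 : ℂ) k, ‖P.eval (z : ℂ)‖ := by
  change 2 * k ^ n / (1 + k ^ n) * maxModulus P 1 ≤ maxModulus P k
  have hk0 : 0 < k := one_pos.trans_le hk
  set Q := reflect n (P.comp (C (k : ℂ) * X))
  have hQdeg : Q.natDegree ≤ n :=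
    natDegree_reflect_le.trans (max_le le_rfl ((natDegree_comp_C_mul_X_le P _).trans hdeg.le))
  have hmain : k ^ n * maxModulus P 1 ≤ (k ^ n + 1) / 2 * maxModulus P k :=
    calc k ^ n * maxModulus P 1 ≤ maxModulus Q k :=
          pow_mul_maxModulus_one_le_maxModulus_reflect_comp hk0 hdeg.le
      _ ≤ (k ^ n + 1) / 2 * maxModulus Q 1 :=
          maxModulus_le_pow_add_one_div_two_mul hQdeg
            (fun a ha => one_le_norm_of_mem_roots_reflect_comp hk0 hdeg hzeros ha) hk
      _ ≤ (k ^ n + 1) / 2 * maxModulus P k := by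
          gcongr
          exact maxModulus_reflect_comp_one_le hk0 hdeg.le
  rw [div_mul_eq_mul_div, div_le_iff₀ (by positivity)]
  linarith

theorem stmt_2 (P : Polynomial ℂ) (n : ℕ) (hn : 0 < n) (hdeg : P.natDegree = n)
    (k : ℝ) (hk : 1 ≤ k) (hzeros : ∀ z : ℂ, P.IsRoot z → ‖z‖ ≤ k) :
    (2 * k ^ n / (1 + k ^ n)) * (⨆ z : Metric.sphere (0 : ℂ) 1, ‖P.eval (z : ℂ)‖) ≤
      ⨆ z : Metric.sphere (0 : ℂ) k, ‖P.eval (z : ℂ)‖ :=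
  stmt_2_general P n hdeg k hk hzeros
end

section
/- Let $P(z)$ be a complex polynomial of degree $n$ with all zeros in $|z| \le k$, where $0 < k \le 1$. Then for every $z$ with $|z| = 1$, $|P'(z)| \ge \frac{n}{1+k}\left(1 + \frac{k}{n}\cdot\frac{k^n |a_n| - |a_0|}{k^n |a_n| + |a_0|}\right) |P(z)|$, where $a_n$ is the leading coefficient and $a_0$ the constant term of $P$. -/
/-!
On the unit circle `P'(w) / P(w) = ∑ 1 / (w - z_j)`, and `Re (w / (w - z)) ≥ 1 / (1 + |z|)` when
`|z| ≤ 1`, so `|P'(w)| ≥ |P(w)| ∑ 1 / (1 + |z_j|)`. For `0 ≤ r ≤ k ≤ 1` each term satisfies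
`1 / (1 + r) ≥ 1 / (1 + k) + k / (1 + k) · (k - r) / (k + r)`, and the inequality
`(ab - xy) / (ab + xy) ≤ (a - x) / (a + x) + (b - y) / (b + y)` (for `0 ≤ x ≤ a`, `0 ≤ y ≤ b`)
gives by induction `∑ (k - r_j) / (k + r_j) ≥ (kⁿ - ∏ r_j) / (kⁿ + ∏ r_j)`, where
`∏ r_j = |a₀| / |aₙ|`.
-/

open Polynomial

lemma mul_sub_mul_div_mul_add_mul_le {a b x y : ℝ} (ha : 0 < a) (hb : 0 < b)
    (hx0 : 0 ≤ x) (hxa : x ≤ a) (hy0 : 0 ≤ y) (hyb : y ≤ b) :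
    (a * b - x * y) / (a * b + x * y) ≤ (a - x) / (a + x) + (b - y) / (b + y) := by
  rw [div_add_div _ _ (by positivity) (by positivity),
    div_le_div_iff₀ (by positivity) (by positivity)]
  nlinarith [mul_nonneg (mul_nonneg (sub_nonneg.2 hxa) (sub_nonneg.2 hyb))
    (sub_nonneg.2 (mul_le_mul hxa hyb hy0 ha.le)), mul_pos ha hb, mul_nonneg hx0 hy0]

lemma Multiset.pow_card_sub_prod_div_pow_card_add_prod_le_sum {k : ℝ} (hk : 0 < k)
    (s : Multiset ℝ) (hs : ∀ x ∈ s, 0 ≤ x ∧ x ≤ k) :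
    (k ^ card s - s.prod) / (k ^ card s + s.prod) ≤ (s.map fun x ↦ (k - x) / (k + x)).sum := by
  induction s using Multiset.induction with
  | empty => simp
  | cons a t ih =>
    have ha := hs a (mem_cons_self a t)
    have ht : ∀ x ∈ t, 0 ≤ x ∧ x ≤ k := fun x hx ↦ hs x (mem_cons_of_mem hx)
    have hprod_nonneg : 0 ≤ t.prod := prod_nonneg fun x hx ↦ (ht x hx).1
    have hprod_le : t.prod ≤ k ^ card t := by
      simpa using prod_map_le_prod_map₀ id (fun _ ↦ k) (fun x hx ↦ (ht x hx).1)
        fun x hx ↦ (ht x hx).2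
    rw [card_cons, pow_succ', prod_cons, map_cons, sum_cons]
    exact (mul_sub_mul_div_mul_add_mul_le hk (by positivity) ha.1 ha.2 hprod_nonneg
      hprod_le).trans (add_le_add le_rfl (ih ht))

lemma one_div_one_add_add_mul_sub_div_add_le {k r : ℝ} (hk0 : 0 < k) (hk1 : k ≤ 1)
    (hr0 : 0 ≤ r) (hrk : r ≤ k) :
    1 / (1 + k) + k / (1 + k) * ((k - r) / (k + r)) ≤ 1 / (1 + r) := by
  rw [div_mul_div_comm, div_add_div _ _ (by positivity) (by positivity),
    div_le_div_iff₀ (by positivity) (by positivity)]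
  nlinarith [mul_nonneg (mul_nonneg hr0 (sub_nonneg.2 hk1)) (sub_nonneg.2 hrk), mul_pos hk0 hk0]

lemma Multiset.card_div_one_add_mul_le_sum {k : ℝ} (hk0 : 0 < k) (hk1 : k ≤ 1)
    (s : Multiset ℝ) (hs_card : card s ≠ 0) (hs : ∀ x ∈ s, 0 ≤ x ∧ x ≤ k) :
    (card s : ℝ) / (1 + k) *
        (1 + k / card s * ((k ^ card s - s.prod) / (k ^ card s + s.prod))) ≤
      (s.map fun r ↦ 1 / (1 + r)).sum := by
  have hcard : (card s : ℝ) ≠ 0 := Nat.cast_ne_zero.2 hs_card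
  calc (card s : ℝ) / (1 + k) *
        (1 + k / card s * ((k ^ card s - s.prod) / (k ^ card s + s.prod)))
      = card s * (1 / (1 + k)) +
          k / (1 + k) * ((k ^ card s - s.prod) / (k ^ card s + s.prod)) := by
        field_simp
    _ ≤ card s * (1 / (1 + k)) + k / (1 + k) * (s.map fun x ↦ (k - x) / (k + x)).sum := by
        gcongr
        exact pow_card_sub_prod_div_pow_card_add_prod_le_sum hk0 s hs
    _ = (s.map fun r ↦ 1 / (1 + k) + k / (1 + k) * ((k - r) / (k + r))).sum := by
        rw [sum_map_add, sum_map_mul_left, map_const', sum_replicate, nsmul_eq_mul]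
    _ ≤ (s.map fun r ↦ 1 / (1 + r)).sum :=
        sum_map_le_sum_map _ _ fun r hr ↦
          one_div_one_add_add_mul_sub_div_add_le hk0 hk1 (hs r hr).1 (hs r hr).2

lemma Complex.re_multiset_sum (s : Multiset ℂ) : s.sum.re = (s.map re).sum :=
  map_multiset_sum reAddGroupHom s

lemma Complex.one_div_one_add_norm_le_re_inv_one_sub {u : ℂ} (hu : ‖u‖ ≤ 1) (hu1 : u ≠ 1) :
    1 / (1 + ‖u‖) ≤ (1 - u)⁻¹.re := by
  have hnormSq : 0 < normSq (1 - u) := normSq_pos.2 (sub_ne_zero.2 hu1.symm)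
  have hre : -‖u‖ ≤ u.re := neg_le_of_abs_le (abs_re_le_norm u)
  have hsq : ‖u‖ ^ 2 = u.re * u.re + u.im * u.im := by rw [Complex.sq_norm, normSq_apply]
  rw [inv_re, div_le_div_iff₀ (by positivity) hnormSq]
  simp only [normSq_apply, sub_re, sub_im, one_re, one_im] at hnormSq ⊢
  -- cleared of denominators, the claim is `(1 - ‖u‖) (‖u‖ + Re u) ≥ 0`
  nlinarith [mul_nonneg (sub_nonneg.2 hu) (neg_le_iff_add_nonneg.1 hre)]

lemma Complex.one_div_one_add_norm_le_re_div_sub {w z : ℂ} (hw : ‖w‖ = 1) (hz : ‖z‖ ≤ 1)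
    (hzw : z ≠ w) : 1 / (1 + ‖z‖) ≤ (w / (w - z)).re := by
  have hw0 : w ≠ 0 := norm_ne_zero_iff.1 (by rw [hw]; exact one_ne_zero)
  have hdiv : w / (w - z) = (1 - z / w)⁻¹ := by
    rw [one_sub_div hw0, inv_div]
  have hnorm : ‖z / w‖ = ‖z‖ := by rw [norm_div, hw, div_one]
  rw [hdiv, ← hnorm]
  exact one_div_one_add_norm_le_re_inv_one_sub (hnorm ▸ hz)
    fun h ↦ hzw ((div_eq_one_iff_eq hw0).1 h)

lemma Polynomial.sum_roots_inv_one_add_norm_mul_le {P : ℂ[X]} {w : ℂ} (hw : ‖w‖ = 1)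
    (hroots : ∀ z ∈ P.roots, ‖z‖ ≤ 1) :
    (P.roots.map fun z ↦ 1 / (1 + ‖z‖)).sum * ‖P.eval w‖ ≤ ‖P.derivative.eval w‖ := by
  by_cases hPw : P.eval w = 0
  · simp [hPw]
  have hsum_le : (P.roots.map fun z ↦ 1 / (1 + ‖z‖)).sum
      ≤ ‖(P.roots.map fun z ↦ 1 / (w - z)).sum‖ :=
    calc (P.roots.map fun z ↦ 1 / (1 + ‖z‖)).sum
        ≤ (P.roots.map fun z ↦ (w / (w - z)).re).sum :=
          Multiset.sum_map_le_sum_map _ _ fun z hz ↦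
            Complex.one_div_one_add_norm_le_re_div_sub hw (hroots z hz)
              fun h ↦ hPw (h ▸ isRoot_of_mem_roots hz)
      _ = (w * (P.roots.map fun z ↦ 1 / (w - z)).sum).re := by
          rw [← Multiset.sum_map_mul_left, Complex.re_multiset_sum, Multiset.map_map]
          simp only [Function.comp_def, mul_one_div]
      _ ≤ ‖w * (P.roots.map fun z ↦ 1 / (w - z)).sum‖ := Complex.re_le_norm _
      _ = ‖(P.roots.map fun z ↦ 1 / (w - z)).sum‖ := by rw [norm_mul, hw, one_mul]
  rw [(IsAlgClosed.splits P).eval_derivative_eq_eval_mul_sum hPw, norm_mul]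
  exact (mul_le_mul_of_nonneg_right hsum_le (norm_nonneg _)).trans_eq (mul_comm _ _)

theorem stmt_4 (P : Polynomial ℂ) (n : ℕ) (hn : 0 < n) (hdeg : P.natDegree = n)
    (k : ℝ) (hk0 : 0 < k) (hk1 : k ≤ 1)
    (hzeros : ∀ z : ℂ, P.IsRoot z → ‖z‖ ≤ k)
    (w : ℂ) (hw : ‖w‖ = 1) :
    (n : ℝ) / (1 + k) *
        (1 + (k / n) * ((k ^ n * ‖P.leadingCoeff‖ - ‖P.coeff 0‖) /
          (k ^ n * ‖P.leadingCoeff‖ + ‖P.coeff 0‖))) * ‖P.eval w‖ ≤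
      ‖P.derivative.eval w‖ := by
  have hsplits := IsAlgClosed.splits P
  have hP : P ≠ 0 := by rintro rfl; simp [← hdeg] at hn
  set s := P.roots.map (‖·‖) with hs_def
  have hcard : Multiset.card s = n := by
    rw [Multiset.card_map, ← hsplits.natDegree_eq_card_roots, hdeg]
  have hs : ∀ x ∈ s, 0 ≤ x ∧ x ≤ k := by
    simp only [hs_def, Multiset.mem_map]
    rintro _ ⟨z, hz, rfl⟩
    exact ⟨norm_nonneg z, hzeros z (isRoot_of_mem_roots hz)⟩
  have hcoeff : ‖P.coeff 0‖ = ‖P.leadingCoeff‖ * s.prod := by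
    rw [hsplits.coeff_zero_eq_leadingCoeff_mul_prod_roots, norm_mul, norm_mul, norm_pow,
      norm_neg, norm_one, one_pow, one_mul]
    exact congrArg (‖P.leadingCoeff‖ * ·) (map_multiset_prod (normHom : ℂ →*₀ ℝ) P.roots)
  have hlc : 0 < ‖P.leadingCoeff‖ := norm_pos_iff.2 (leadingCoeff_ne_zero.2 hP)
  have hratio :
      (k ^ n * ‖P.leadingCoeff‖ - ‖P.coeff 0‖) / (k ^ n * ‖P.leadingCoeff‖ + ‖P.coeff 0‖)
        = (k ^ n - s.prod) / (k ^ n + s.prod) := by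
    rw [hcoeff, mul_comm (k ^ n), ← mul_sub, ← mul_add, mul_div_mul_left _ _ hlc.ne']
  have hsum := Multiset.card_div_one_add_mul_le_sum hk0 hk1 s (hcard ▸ hn.ne') hs
  rw [hcard, hs_def, Multiset.map_map] at hsum
  rw [hratio]
  refine (mul_le_mul_of_nonneg_right hsum (norm_nonneg _)).trans ?_
  exact sum_roots_inv_one_add_norm_mul_le hw fun z hz ↦
    (hzeros z (isRoot_of_mem_roots hz)).trans hk1
end

section
/- Let $P(z)$ be a degree-$n$ polynomial with all zeros in $|z| \le k$ where $0 < k \le 1$, and let $\alpha \in \mathbb{C}$ with $|\alpha| \ge k$. Then $\max_{|z|=1}|D_\alpha[P](z)| \ge n\,\frac{|\alpha|-k}{1+k}\left(1 + \frac{k}{n}\cdot\frac{k^n|a_n|-|a_0|}{k^n|a_n|+|a_0|}\right)\max_{|z|=1}|P(z)|$, where $D_\alpha[P](z) = nP(z)+(\alpha-z)P'(z)$ and $a_n, a_0$ are the leading coefficient and constant term of $P$. -/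
/-!
Let `z` be a point of the unit circle where `|P|` is maximal, and write
`z P'(z) = P(z) W` with `W = ∑ (1 - c / z)⁻¹`, the sum running over the zeros `c` of `P`.
Every term `w` of `W` satisfies `|w - 1| ≤ k |w|`, a convex condition (a sublevel set of a
convex quadratic), so the mean `W / n` satisfies it too: `|n P(z) - z P'(z)| ≤ k |P'(z)|`, whence
`|D_α P(z)| ≥ (|α| - k) |P'(z)| = (|α| - k) |P(z)| |W|`. Finally `|W| ≥ Re W` and
`Re (1 - u)⁻¹ ≥ 1 / (1 + |u|)`, and an induction over the zeros bounds `∑ 1 / (1 + |c|)` below by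
`(n + k (k^n - ∏ |c|) / (k^n + ∏ |c|)) / (1 + k)`, where `∏ |c| = |a_0| / |a_n|`.
-/

open Polynomial

theorem one_add_mul_div_le_div_add_mul_div {k a K p : ℝ} (hk0 : 0 < k) (hk1 : k ≤ 1)
    (ha0 : 0 ≤ a) (hak : a ≤ k) (hK : 0 < K) (hp0 : 0 ≤ p) (hpK : p ≤ K) :
    1 + k * ((k * K - a * p) / (k * K + a * p)) ≤ (1 + k) / (1 + a) + k * ((K - p) / (K + p)) := by
  have : 0 < k * K + a * p := by positivity
  have hdiff : (1 + k) / (1 + a) + k * ((K - p) / (K + p)) -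
      (1 + k * ((k * K - a * p) / (k * K + a * p))) =
      (k - a) * ((k - a) * K * (K - p) + a * ((K - p) ^ 2 + 2 * K * p * (1 - k))) /
        ((1 + a) * (k * K + a * p) * (K + p)) := by
    field_simp
    ring
  have hka : 0 ≤ k - a := sub_nonneg.2 hak
  have hpK' : 0 ≤ K - p := sub_nonneg.2 hpK
  have hk1' : 0 ≤ 1 - k := sub_nonneg.2 hk1
  rw [← sub_nonneg, hdiff]
  positivity

theorem card_add_mul_div_le_mul_sum_inv {k : ℝ} (hk0 : 0 < k) (hk1 : k ≤ 1) {s : Multiset ℝ}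
    (hs : ∀ r ∈ s, r ∈ Set.Icc 0 k) :
    Multiset.card s + k * ((k ^ Multiset.card s - s.prod) / (k ^ Multiset.card s + s.prod)) ≤
      (1 + k) * (s.map fun r => (1 + r)⁻¹).sum := by
  induction s using Multiset.induction_on with
  | empty => simp
  | cons a t ih =>
    obtain ⟨ha0, hak⟩ := hs a (Multiset.mem_cons_self a t)
    have ht : ∀ r ∈ t, r ∈ Set.Icc 0 k := fun r hr => hs r (Multiset.mem_cons_of_mem hr)
    have hp0 : 0 ≤ t.prod := Multiset.prod_nonneg fun r hr => (ht r hr).1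
    have hpK : t.prod ≤ k ^ Multiset.card t := by
      simpa using Multiset.prod_map_le_prod_map₀ id (fun _ => k) (fun r hr => (ht r hr).1)
        fun r hr => (ht r hr).2
    have hstep := one_add_mul_div_le_div_add_mul_div hk0 hk1 ha0 hak
      (pow_pos hk0 (Multiset.card t)) hp0 hpK
    have hind := ih ht
    simp only [Multiset.card_cons, Multiset.prod_cons, Multiset.map_cons, Multiset.sum_cons,
      Nat.cast_succ, pow_succ']
    rw [mul_add, ← div_eq_mul_inv]
    linarith

theorem convex_setOf_norm_sub_le_mul_norm {E : Type*} [NormedAddCommGroup E]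
    [InnerProductSpace ℝ E] (e : E) {k : ℝ} (hk0 : 0 ≤ k) (hk1 : k ≤ 1) :
    Convex ℝ {w : E | ‖w - e‖ ≤ k * ‖w‖} := by
  have hq : ConvexOn ℝ Set.univ fun w : E => (1 - k ^ 2) * ‖w‖ ^ 2 - 2 * inner ℝ e w := by
    have hnorm : ConvexOn ℝ Set.univ fun w : E => ‖w‖ := convexOn_norm convex_univ
    have hsq := (hnorm.pow (fun w _ => norm_nonneg w) 2).smul (c := 1 - k ^ 2) (by nlinarith)
    exact hsq.sub (((2 : ℝ) • innerₛₗ ℝ e).concaveOn convex_univ)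
  convert hq.convex_le (-‖e‖ ^ 2) using 1
  ext w
  simp only [Set.mem_ofPred_eq, Set.mem_univ, true_and]
  rw [← sq_le_sq₀ (norm_nonneg _) (by positivity), norm_sub_sq_real, real_inner_comm]
  constructor <;> intro h <;> linarith

theorem Convex.exists_mem_multiset_sum_eq_card_smul {𝕜 E : Type*} [Field 𝕜] [LinearOrder 𝕜]
    [IsStrictOrderedRing 𝕜] [AddCommGroup E] [Module 𝕜 E] {S : Set E} (hS : Convex 𝕜 S)
    (hne : S.Nonempty) {s : Multiset E} (hs : ∀ x ∈ s, x ∈ S) :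
    ∃ v ∈ S, s.sum = (Multiset.card s : 𝕜) • v := by
  induction s using Multiset.induction_on with
  | empty => exact ⟨hne.some, hne.some_mem, by simp⟩
  | cons a t ih =>
    obtain ⟨v, hv, hsum⟩ := ih fun x hx => hs x (Multiset.mem_cons_of_mem hx)
    obtain ⟨w, hw, hwv⟩ := hS.exists_mem_add_smul_eq (hs a (Multiset.mem_cons_self a t)) hv
      zero_le_one (Nat.cast_nonneg (Multiset.card t))
    refine ⟨w, hw, ?_⟩
    rw [Multiset.sum_cons, Multiset.card_cons, Nat.cast_succ, add_comm _ (1 : 𝕜), hwv, hsum,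
      one_smul]

theorem norm_multiset_sum_sub_card_smul_le {E : Type*} [NormedAddCommGroup E]
    [InnerProductSpace ℝ E] (e : E) {k : ℝ} (hk0 : 0 ≤ k) (hk1 : k ≤ 1) {s : Multiset E}
    (hs : ∀ w ∈ s, ‖w - e‖ ≤ k * ‖w‖) :
    ‖s.sum - Multiset.card s • e‖ ≤ k * ‖s.sum‖ := by
  have hconv := convex_setOf_norm_sub_le_mul_norm e hk0 hk1
  obtain ⟨v, hv, hsum⟩ := hconv.exists_mem_multiset_sum_eq_card_smul
    ⟨e, by simpa using mul_nonneg hk0 (norm_nonneg e)⟩ hs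
  have hv : ‖v - e‖ ≤ k * ‖v‖ := hv
  rw [hsum, ← Nat.cast_smul_eq_nsmul ℝ, ← smul_sub, norm_smul, norm_smul, mul_left_comm]
  exact mul_le_mul_of_nonneg_left hv (norm_nonneg _)

theorem inv_one_add_norm_le_re_inv_one_sub {u : ℂ} (hu : ‖u‖ ≤ 1) (hu1 : u ≠ 1) :
    (1 + ‖u‖)⁻¹ ≤ ((1 - u)⁻¹).re := by
  have hd : 0 < Complex.normSq (1 - u) := Complex.normSq_pos.2 (sub_ne_zero.2 hu1.symm)
  have hsq : ‖u‖ ^ 2 = u.re ^ 2 + u.im ^ 2 := by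
    rw [Complex.sq_norm, Complex.normSq_apply]
    ring
  have hre : 0 ≤ ‖u‖ + u.re := by linarith [Complex.abs_re_le_norm u, neg_abs_le u.re]
  rw [Complex.inv_re, inv_eq_one_div, div_le_div_iff₀ (by positivity) hd]
  simp only [Complex.normSq_apply, Complex.sub_re, Complex.sub_im, Complex.one_re,
    Complex.one_im]
  nlinarith [mul_nonneg (sub_nonneg.2 hu) hre]

theorem sub_mul_norm_le_norm_add_sub_mul {R : Type*} [NormedField R] {k : ℝ} {a p u z α : R}
    (h : ‖a * p - z * u‖ ≤ k * ‖u‖) :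
    (‖α‖ - k) * ‖u‖ ≤ ‖a * p + (α - z) * u‖ := by
  have hsplit : α * u = (a * p + (α - z) * u) - (a * p - z * u) := by ring
  have htri := norm_sub_le (a * p + (α - z) * u) (a * p - z * u)
  rw [← hsplit, norm_mul] at htri
  linarith

theorem norm_sum_inv_one_sub_div_sub_card_le {k : ℝ} (hk0 : 0 ≤ k) (hk1 : k ≤ 1) {z : ℂ}
    (hz : ‖z‖ = 1) {s : Multiset ℂ} (hs : ∀ c ∈ s, ‖c‖ ≤ k) (hzs : z ∉ s) :
    ‖(s.map fun c => (1 - c / z)⁻¹).sum - Multiset.card s‖ ≤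
      k * ‖(s.map fun c => (1 - c / z)⁻¹).sum‖ := by
  have h := norm_multiset_sum_sub_card_smul_le (1 : ℂ) hk0 hk1
    (s := s.map fun c => (1 - c / z)⁻¹) ?_
  · simpa [nsmul_eq_mul] using h
  intro w hw
  obtain ⟨c, hc, rfl⟩ := Multiset.mem_map.1 hw
  have hu : c / z ≠ 1 := fun h =>
    hzs ((div_eq_one_iff_eq (norm_ne_zero_iff.1 (hz ▸ one_ne_zero))).1 h ▸ hc)
  have hsub : (1 - c / z)⁻¹ - 1 = c / z * (1 - c / z)⁻¹ := by
    field_simp [sub_ne_zero.2 hu.symm]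
    ring
  rw [hsub, norm_mul, norm_div, hz, div_one]
  exact mul_le_mul_of_nonneg_right (hs c hc) (norm_nonneg _)

theorem card_add_mul_div_le_mul_re_sum {k : ℝ} (hk0 : 0 < k) (hk1 : k ≤ 1) {z : ℂ}
    (hz : ‖z‖ = 1) {s : Multiset ℂ} (hs : ∀ c ∈ s, ‖c‖ ≤ k) (hzs : z ∉ s) :
    Multiset.card s + k * ((k ^ Multiset.card s - (s.map (‖·‖)).prod) /
        (k ^ Multiset.card s + (s.map (‖·‖)).prod)) ≤
      (1 + k) * ((s.map fun c => (1 - c / z)⁻¹).sum).re := by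
  have h := card_add_mul_div_le_mul_sum_inv hk0 hk1 (s := s.map (‖·‖)) fun r hr => by
    obtain ⟨c, hc, rfl⟩ := Multiset.mem_map.1 hr
    exact ⟨norm_nonneg c, hs c hc⟩
  rw [Multiset.card_map, Multiset.map_map] at h
  refine h.trans (mul_le_mul_of_nonneg_left ?_ (by positivity))
  rw [show ∀ w : ℂ, w.re = Complex.reAddGroupHom w from fun _ => rfl, map_multiset_sum,
    Multiset.map_map]
  refine Multiset.sum_map_le_sum_map _ _ fun c hc => ?_
  have hu : c / z ≠ 1 := fun h =>
    hzs ((div_eq_one_iff_eq (norm_ne_zero_iff.1 (hz ▸ one_ne_zero))).1 h ▸ hc)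
  simpa [norm_div, hz] using
    inv_one_add_norm_le_re_inv_one_sub (by simpa [norm_div, hz] using (hs c hc).trans hk1) hu

theorem Polynomial.Splits.norm_coeff_zero_eq_norm_leadingCoeff_mul_prod {K : Type*}
    [NormedField K] {P : K[X]} (hP : P.Splits) :
    ‖P.coeff 0‖ = ‖P.leadingCoeff‖ * (P.roots.map (‖·‖)).prod := by
  rw [hP.coeff_zero_eq_leadingCoeff_mul_prod_roots, norm_mul, norm_mul, norm_pow, norm_neg,
    norm_one, one_pow, one_mul]
  congr 1
  exact map_multiset_prod (normHom : K →*₀ ℝ) P.roots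

theorem Polynomial.Splits.mul_eval_derivative_eq_eval_mul_sum {K : Type*} [Field K] {P : K[X]}
    (hP : P.Splits) {z : K} (hz : z ≠ 0) (hPz : P.eval z ≠ 0) :
    z * P.derivative.eval z = P.eval z * (P.roots.map fun c => (1 - c / z)⁻¹).sum := by
  rw [hP.eval_derivative_eq_eval_mul_sum hPz, mul_left_comm, ← Multiset.sum_map_mul_left]
  congr 2
  refine Multiset.map_congr rfl fun c _ => ?_
  rw [one_sub_div hz, inv_div, mul_one_div]

theorem Polynomial.mul_norm_eval_le_norm_polar_eval {P : ℂ[X]} {k : ℝ} (hk0 : 0 < k)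
    (hk1 : k ≤ 1) (hroots : ∀ c ∈ P.roots, ‖c‖ ≤ k) {α z : ℂ} (hα : k ≤ ‖α‖) (hz : ‖z‖ = 1)
    (hPz : P.eval z ≠ 0) :
    (‖α‖ - k) * ((P.natDegree + k * ((k ^ P.natDegree - (P.roots.map (‖·‖)).prod) /
        (k ^ P.natDegree + (P.roots.map (‖·‖)).prod))) / (1 + k)) * ‖P.eval z‖ ≤
      ‖P.natDegree * P.eval z + (α - z) * P.derivative.eval z‖ := by
  have hzs : z ∉ P.roots := fun h => hPz (isRoot_of_mem_roots h)
  have hcard : Multiset.card P.roots = P.natDegree :=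
    (IsAlgClosed.splits P).natDegree_eq_card_roots.symm
  have hid := (IsAlgClosed.splits P).mul_eval_derivative_eq_eval_mul_sum
    (norm_ne_zero_iff.1 (hz ▸ one_ne_zero)) hPz
  set W := (P.roots.map fun c => (1 - c / z)⁻¹).sum
  have hW := norm_sum_inv_one_sub_div_sub_card_le hk0.le hk1 hz hroots hzs
  have hre := card_add_mul_div_le_mul_re_sum hk0 hk1 hz hroots hzs
  rw [hcard] at hW hre
  have hnormu : ‖P.derivative.eval z‖ = ‖P.eval z‖ * ‖W‖ := by
    rw [← norm_mul, ← hid, norm_mul, hz, one_mul]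
  have hrem : ‖P.natDegree * P.eval z - z * P.derivative.eval z‖ ≤
      k * ‖P.derivative.eval z‖ := by
    rw [hid, show (P.natDegree : ℂ) * P.eval z - P.eval z * W = -(P.eval z * (W - P.natDegree))
      by ring, norm_neg, norm_mul, hnormu, mul_left_comm]
    exact mul_le_mul_of_nonneg_left hW (norm_nonneg _)
  calc _ ≤ (‖α‖ - k) * ‖W‖ * ‖P.eval z‖ := by
        gcongr
        exact (div_le_iff₀' (by positivity)).2
          (hre.trans (mul_le_mul_of_nonneg_left (Complex.re_le_norm W) (by positivity)))
    _ = (‖α‖ - k) * ‖P.derivative.eval z‖ := by rw [hnormu]; ring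
    _ ≤ _ := sub_mul_norm_le_norm_add_sub_mul hrem

theorem stmt_11 (P : Polynomial ℂ) (n : ℕ) (hn : 0 < n) (hdeg : P.natDegree = n)
    (k : ℝ) (hk0 : 0 < k) (hk1 : k ≤ 1)
    (hzeros : ∀ z : ℂ, P.IsRoot z → ‖z‖ ≤ k)
    (α : ℂ) (hα : k ≤ ‖α‖)
    (D : Polynomial ℂ)
    (hD : D = Polynomial.C (n : ℂ) * P + (Polynomial.C α - Polynomial.X) * P.derivative) :
    (n : ℝ) * ((‖α‖ - k) / (1 + k)) *
        (1 + (k / n) * ((k ^ n * ‖P.leadingCoeff‖ - ‖P.coeff 0‖) /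
          (k ^ n * ‖P.leadingCoeff‖ + ‖P.coeff 0‖))) *
        (⨆ w : Metric.sphere (0 : ℂ) 1, ‖P.eval (w : ℂ)‖) ≤
      ⨆ w : Metric.sphere (0 : ℂ) 1, ‖D.eval (w : ℂ)‖ := by
  obtain ⟨z, hz, hsupP⟩ := (isCompact_sphere (0 : ℂ) 1).exists_sSup_image_eq
    (NormedSpace.sphere_nonempty.2 zero_le_one) P.continuous.norm.continuousOn
  have hDle : ‖D.eval z‖ ≤ ⨆ w : Metric.sphere (0 : ℂ) 1, ‖D.eval (w : ℂ)‖ := by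
    refine le_ciSup (f := fun w : Metric.sphere (0 : ℂ) 1 => ‖D.eval (w : ℂ)‖) ?_ ⟨z, hz⟩
    simpa [Set.image_eq_range] using
      (isCompact_sphere (0 : ℂ) 1).bddAbove_image D.continuous.norm.continuousOn
  rw [sSup_image'] at hsupP
  rw [hsupP]
  refine le_trans ?_ hDle
  rcases eq_or_ne (P.eval z) 0 with hPz | hPz
  · simp [hPz]
  have hlc : P.leadingCoeff ≠ 0 := leadingCoeff_ne_zero.2 fun h => hPz (by simp [h])
  have hpt := P.mul_norm_eval_le_norm_polar_eval hk0 hk1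
    (fun c hc => hzeros c (isRoot_of_mem_roots hc)) hα (mem_sphere_zero_iff_norm.1 hz) hPz
  rw [hdeg] at hpt
  rw [(IsAlgClosed.splits P).norm_coeff_zero_eq_norm_leadingCoeff_mul_prod, mul_comm (k ^ n),
    ← mul_sub, ← mul_add, mul_div_mul_left _ _ (norm_ne_zero_iff.2 hlc), hD]
  simp only [eval_add, eval_mul, eval_C, eval_sub, eval_X]
  refine (le_of_eq ?_).trans hpt
  have hn0 : (n : ℝ) ≠ 0 := by positivity
  field_simp
end

section
/- If $P(z)$ is a polynomial of degree $n \ge 1$ and $\alpha \in \mathbb{C}$ with $|\alpha| \ge 1$, then for every $z$ with $|z| \ge 1$, $|D_\alpha[P](z)| \le n |\alpha| |z|^{n-1} \max_{|w|=1} |P(w)|$, where $D_\alpha[P](z) = nP(z) + (\alpha - z)P'(z)$. -/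
/-!
On the unit circle `D_α P = (nP - zP') + αP'`, so with `M = max_{|w|=1} |P(w)|` everything rests
on the inequality `|nP(w) - wP'(w)| + |P'(w)| ≤ nM` for `|w| = 1`. For `|β| > M` the polynomial
`G = P - βzⁿ` still has degree `n`, and all its zeros lie in the closed unit disc, since outside
it `|P(z)| ≤ M|z|ⁿ < |βzⁿ|`. Writing `wG'/G = Σ w/(w - r)` over the zeros `r` of `G`, each term
has real part at least `1/2`, whence `|nG(w) - wG'(w)| ≤ |G'(w)|`, i.e.
`|nP(w) - wP'(w)| ≤ |P'(w) - nβwⁿ⁻¹|`; choosing the argument of `β` and letting `|β| ↓ M` gives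
the inequality. Thus `|D_α P| ≤ n|α|M` on the circle, and as `D_α P` has degree at most `n - 1`,
the maximum principle for its reversal gives `|D_α P(z)| ≤ n|α||z|ⁿ⁻¹M` for `|z| ≥ 1`.
-/

open Polynomial Metric

namespace Complex

lemma norm_sub_ofReal_sq (u : ℂ) (c : ℝ) : ‖u - c‖ ^ 2 = ‖u‖ ^ 2 - 2 * c * u.re + c ^ 2 := by
  simp only [Complex.sq_norm, normSq_apply, sub_re, sub_im, ofReal_re, ofReal_im]
  ring

lemma norm_sub_ofReal_le_norm_iff {u : ℂ} {c : ℝ} (hc : 0 < c) :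
    ‖u - c‖ ≤ ‖u‖ ↔ c / 2 ≤ u.re := by
  rw [← sq_le_sq₀ (norm_nonneg _) (norm_nonneg _), norm_sub_ofReal_sq, div_le_iff₀ two_pos]
  constructor <;> intro h <;> nlinarith

lemma half_le_re_div_sub {w r : ℂ} (hw : ‖w‖ = 1) (hr : ‖r‖ ≤ 1) (hwr : w ≠ r) :
    1 / 2 ≤ (w / (w - r)).re := by
  have hsub : w - r ≠ 0 := sub_ne_zero.mpr hwr
  rw [← norm_sub_ofReal_le_norm_iff one_pos, ofReal_one, div_sub_one hsub, sub_sub_cancel,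
    norm_div, norm_div, hw]
  gcongr

lemma norm_multiset_sum_sub_card_le {s : Multiset ℂ} (hs : ∀ u ∈ s, 1 / 2 ≤ u.re) :
    ‖s.sum - s.card‖ ≤ ‖s.sum‖ := by
  rcases Nat.eq_zero_or_pos (Multiset.card s) with hs0 | hpos
  · simp [Multiset.card_eq_zero.mp hs0]
  have hre : s.card • (1 / 2 : ℝ) ≤ (s.map re).sum :=
    Multiset.card_map re s ▸ Multiset.card_nsmul_le_sum (by simpa using hs)
  rw [← ofReal_natCast, norm_sub_ofReal_le_norm_iff (by positivity)]
  rw [nsmul_eq_mul] at hre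
  have : (s.map re).sum = s.sum.re := (map_multiset_sum reAddGroupHom s).symm
  linarith

theorem norm_add_norm_le_of_forall_lt_norm_s15 {a d : ℂ} {R : ℝ}
    (h : ∀ u : ℂ, R < ‖u‖ → ‖a‖ ≤ ‖d - u‖) (hd : ‖d‖ ≤ ‖a‖ + R) : ‖a‖ + ‖d‖ ≤ R := by
  set e := exp (arg d * I)
  have he : ‖e‖ = 1 := norm_exp_ofReal_mul_I _
  have hde : d = ‖d‖ * e := (norm_mul_exp_arg_mul_I d).symm
  have hmax : ‖a‖ + ‖d‖ ≤ max R ‖d‖ := by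
    refine le_of_forall_gt_imp_ge_of_dense fun s hs ↦ ?_
    obtain ⟨hRs, hds⟩ := max_lt_iff.mp hs
    have hs0 : 0 ≤ s := (norm_nonneg d).trans hds.le
    have key := h (s * e) (by rwa [norm_mul, he, mul_one, norm_real, Real.norm_of_nonneg hs0])
    rw [hde, ← sub_mul, norm_mul, he, mul_one, ← ofReal_sub, norm_real,
      Real.norm_of_nonpos (by linarith)] at key
    linarith
  rcases le_total ‖d‖ R with hdR | hRd
  · rwa [max_eq_left hdR] at hmax
  · rw [max_eq_right hRd] at hmax
    linarith [norm_nonneg a]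

end Complex

namespace Polynomial

theorem norm_natDegree_mul_eval_sub_mul_eval_derivative_le {G : ℂ[X]}
    (hG : ∀ r ∈ G.roots, ‖r‖ ≤ 1) {w : ℂ} (hw : ‖w‖ = 1) :
    ‖(G.natDegree : ℂ) * G.eval w - w * G.derivative.eval w‖ ≤ ‖G.derivative.eval w‖ := by
  by_cases hGw : G.eval w = 0
  · simp [hGw, hw]
  have hsplit : G.Splits := IsAlgClosed.splits G
  set S := (G.roots.map fun r ↦ w / (w - r)).sum
  have hS : w * G.derivative.eval w = G.eval w * S := by
    rw [hsplit.eval_derivative_eq_eval_mul_sum hGw, mul_left_comm, ← Multiset.sum_map_mul_left]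
    simp_rw [mul_one_div, S]
  have hre : ∀ u ∈ G.roots.map fun r ↦ w / (w - r), 1 / 2 ≤ u.re := by
    simp only [Multiset.mem_map, forall_exists_index, and_imp, forall_apply_eq_imp_iff₂]
    intro r hr
    refine Complex.half_le_re_div_sub hw (hG r hr) ?_
    rintro rfl
    exact hGw (isRoot_of_mem_roots hr)
  calc ‖(G.natDegree : ℂ) * G.eval w - w * G.derivative.eval w‖
      = ‖G.eval w‖ * ‖S - G.roots.card‖ := by
        rw [hS, hsplit.natDegree_eq_card_roots, ← norm_mul, ← norm_neg]
        congr 1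
        ring
    _ ≤ ‖G.eval w‖ * ‖S‖ := by
        gcongr
        simpa using Complex.norm_multiset_sum_sub_card_le hre
    _ = ‖G.derivative.eval w‖ := by rw [← norm_mul, ← hS, norm_mul, hw, one_mul]

section UnitCircleBound

variable {Q : ℂ[X]} {C : ℝ} (hC : ∀ w : ℂ, ‖w‖ = 1 → ‖Q.eval w‖ ≤ C)
include hC

theorem norm_eval_le_of_norm_le_one {v : ℂ} (hv : ‖v‖ ≤ 1) : ‖Q.eval v‖ ≤ C := by
  refine Complex.norm_le_of_forall_mem_frontier_norm_le (U := ball 0 1) isBounded_ball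
    Q.differentiable.diffContOnCl (fun w hw ↦ hC w ?_) ?_
  · rwa [frontier_ball 0 one_ne_zero, mem_sphere_zero_iff_norm] at hw
  · rwa [closure_ball 0 one_ne_zero, mem_closedBall_zero_iff]

variable {m : ℕ} (hm : Q.natDegree ≤ m)
include hm

omit hC in
theorem eval_reflect_inv_mul_pow {x : ℂ} (hx : x ≠ 0) :
    (Q.reflect m).eval x⁻¹ * x ^ m = Q.eval x := by
  have : Invertible x := invertibleOfNonzero hx
  simpa using eval₂_reflect_mul_pow (RingHom.id ℂ) x m Q hm

theorem norm_eval_reflect_le {v : ℂ} (hv : ‖v‖ ≤ 1) : ‖(Q.reflect m).eval v‖ ≤ C := by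
  refine norm_eval_le_of_norm_le_one (fun w hw ↦ ?_) hv
  have hw0 : w ≠ 0 := norm_ne_zero_iff.mp (by rw [hw]; exact one_ne_zero)
  have := congrArg norm (eval_reflect_inv_mul_pow hm (inv_ne_zero hw0))
  rw [inv_inv, norm_mul, norm_pow, norm_inv, hw, inv_one, one_pow, mul_one] at this
  exact this ▸ hC _ (by rw [norm_inv, hw, inv_one])

theorem norm_eval_le_pow_mul {z : ℂ} (hz : 1 ≤ ‖z‖) : ‖Q.eval z‖ ≤ ‖z‖ ^ m * C := by
  have hz0 : z ≠ 0 := norm_pos_iff.mp (one_pos.trans_le hz)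
  rw [← eval_reflect_inv_mul_pow hm hz0, norm_mul, norm_pow, mul_comm]
  gcongr
  exact norm_eval_reflect_le hC hm (by rw [norm_inv]; exact inv_le_one_of_one_le₀ hz)

theorem norm_coeff_le : ‖Q.coeff m‖ ≤ C := by
  have := norm_eval_reflect_le hC hm (v := 0) (by simp)
  rwa [← coeff_zero_eq_eval_zero, coeff_reflect, revAt_le (Nat.zero_le m), Nat.sub_zero] at this

end UnitCircleBound

section PolarDerivative

variable {R : Type*} [CommRing R]

theorem coeff_X_mul_derivative (P : R[X]) (k : ℕ) :
    (X * derivative P).coeff k = k * P.coeff k := by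
  rcases k with _ | k
  · simp
  · simp [coeff_derivative, mul_comm]

noncomputable def polarDerivative (α : R) (P : R[X]) : R[X] :=
  C (P.natDegree : R) * P + (C α - X) * derivative P

theorem eval_polarDerivative (α : R) (P : R[X]) (z : R) :
    (polarDerivative α P).eval z = P.natDegree * P.eval z + (α - z) * P.derivative.eval z := by
  simp [polarDerivative]

theorem natDegree_C_mul_sub_X_mul_derivative_le (P : R[X]) :
    (C (P.natDegree : R) * P - X * derivative P).natDegree ≤ P.natDegree - 1 := by
  rw [natDegree_le_iff_coeff_eq_zero]
  intro k hk
  rw [coeff_sub, coeff_C_mul, coeff_X_mul_derivative, ← sub_mul]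
  rcases eq_or_lt_of_le (show P.natDegree ≤ k by omega) with rfl | hlt
  · rw [sub_self, zero_mul]
  · rw [coeff_eq_zero_of_natDegree_lt hlt, mul_zero]

theorem natDegree_polarDerivative_le (α : R) (P : R[X]) :
    (polarDerivative α P).natDegree ≤ P.natDegree - 1 := by
  have h : polarDerivative α P =
      (C (P.natDegree : R) * P - X * derivative P) + C α * derivative P := by
    rw [polarDerivative]; ring
  rw [h]
  exact natDegree_add_le_of_degree_le (natDegree_C_mul_sub_X_mul_derivative_le P)
    ((natDegree_C_mul_le _ _).trans (natDegree_derivative_le P))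

end PolarDerivative

section Malik

variable {P : ℂ[X]} {M : ℝ} (hM : ∀ w : ℂ, ‖w‖ = 1 → ‖P.eval w‖ ≤ M)
include hM

theorem natDegree_sub_C_mul_X_pow_natDegree {β : ℂ} (hβ : M < ‖β‖) :
    (P - C β * X ^ P.natDegree).natDegree = P.natDegree := by
  refine le_antisymm ((natDegree_sub_le _ _).trans (max_le le_rfl (natDegree_C_mul_X_pow_le _ _)))
    (le_natDegree_of_ne_zero ?_)
  rw [coeff_sub, coeff_C_mul_X_pow, if_pos rfl, sub_ne_zero]
  rintro h
  exact (norm_coeff_le hM le_rfl).not_gt (h ▸ hβ)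

theorem norm_le_one_of_mem_roots_sub_C_mul_X_pow {β : ℂ} (hβ : M < ‖β‖) {r : ℂ}
    (hr : r ∈ (P - C β * X ^ P.natDegree).roots) : ‖r‖ ≤ 1 := by
  by_contra! hr1
  have hPr : P.eval r = β * r ^ P.natDegree := by
    simpa [sub_eq_zero] using isRoot_of_mem_roots hr
  have := norm_eval_le_pow_mul hM le_rfl hr1.le
  rw [hPr, norm_mul, norm_pow, mul_comm] at this
  exact this.not_gt (by gcongr)

theorem norm_natDegree_mul_eval_sub_le_of_lt_norm {β : ℂ} (hβ : M < ‖β‖) (hP : 0 < P.natDegree)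
    {w : ℂ} (hw : ‖w‖ = 1) :
    ‖(P.natDegree : ℂ) * P.eval w - w * P.derivative.eval w‖ ≤
      ‖P.derivative.eval w - P.natDegree * β * w ^ (P.natDegree - 1)‖ := by
  have key := norm_natDegree_mul_eval_sub_mul_eval_derivative_le
    (fun r hr ↦ norm_le_one_of_mem_roots_sub_C_mul_X_pow hM hβ hr) hw
  set n := P.natDegree
  have hG : (P - C β * X ^ n).eval w = P.eval w - β * w ^ n := by simp
  have hG' :
      (P - C β * X ^ n).derivative.eval w = P.derivative.eval w - n * β * w ^ (n - 1) := by
    rw [derivative_sub, derivative_C_mul_X_pow, eval_sub, eval_mul, eval_C, eval_pow, eval_X,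
      mul_comm β]
  have hpow : w * w ^ (n - 1) = w ^ n := by rw [← pow_succ', Nat.sub_add_cancel hP]
  rw [natDegree_sub_C_mul_X_pow_natDegree hM hβ, hG, hG'] at key
  calc ‖(n : ℂ) * P.eval w - w * P.derivative.eval w‖
      = ‖n * (P.eval w - β * w ^ n) - w * (P.derivative.eval w - n * β * w ^ (n - 1))‖ := by
        rw [← hpow]
        congr 1
        ring
    _ ≤ _ := key

theorem norm_natDegree_mul_eval_sub_add_norm_eval_derivative_le (hP : 0 < P.natDegree) {w : ℂ}
    (hw : ‖w‖ = 1) :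
    ‖(P.natDegree : ℂ) * P.eval w - w * P.derivative.eval w‖ + ‖P.derivative.eval w‖ ≤
      P.natDegree * M := by
  set n := P.natDegree
  have hn : (n : ℂ) ≠ 0 := by exact_mod_cast hP.ne'
  have hw0 : w ≠ 0 := norm_ne_zero_iff.mp (by rw [hw]; exact one_ne_zero)
  refine Complex.norm_add_norm_le_of_forall_lt_norm_s15 (fun u hu ↦ ?_) ?_
  · have hβ : M < ‖u / (n * w ^ (n - 1))‖ := by
      rwa [norm_div, norm_mul, norm_pow, hw, one_pow, mul_one, Complex.norm_natCast,
        lt_div_iff₀ (by positivity), mul_comm]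
    have := norm_natDegree_mul_eval_sub_le_of_lt_norm hM hβ hP hw
    rwa [show (n : ℂ) * (u / (n * w ^ (n - 1))) * w ^ (n - 1) = u by field_simp] at this
  · calc ‖P.derivative.eval w‖
        = ‖n * P.eval w - (n * P.eval w - w * P.derivative.eval w)‖ := by
          rw [sub_sub_cancel, norm_mul, hw, one_mul]
      _ ≤ ‖(n : ℂ) * P.eval w‖ + ‖n * P.eval w - w * P.derivative.eval w‖ := norm_sub_le _ _
      _ ≤ n * M + ‖n * P.eval w - w * P.derivative.eval w‖ := by
          rw [norm_mul, Complex.norm_natCast]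
          gcongr
          exact hM w hw
      _ = _ := add_comm _ _

theorem norm_eval_polarDerivative_le (hP : 0 < P.natDegree) {α : ℂ} (hα : 1 ≤ ‖α‖) {w : ℂ}
    (hw : ‖w‖ = 1) : ‖(polarDerivative α P).eval w‖ ≤ P.natDegree * ‖α‖ * M := by
  have key := norm_natDegree_mul_eval_sub_add_norm_eval_derivative_le hM hP hw
  set A := (P.natDegree : ℂ) * P.eval w - w * P.derivative.eval w with hA
  calc ‖(polarDerivative α P).eval w‖ = ‖A + α * P.derivative.eval w‖ := by
        rw [eval_polarDerivative, hA]
        congr 1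
        ring
    _ ≤ ‖A‖ + ‖α‖ * ‖P.derivative.eval w‖ := by rw [← norm_mul]; exact norm_add_le _ _
    _ ≤ ‖α‖ * (‖A‖ + ‖P.derivative.eval w‖) := by nlinarith [norm_nonneg A]
    _ ≤ ‖α‖ * (P.natDegree * M) := by gcongr
    _ = _ := by ring

end Malik

end Polynomial

theorem Continuous.le_iSup_sphere {E : Type*} [PseudoMetricSpace E] [ProperSpace E] {f : E → ℝ}
    (hf : Continuous f) {x : E} {r : ℝ} {w : E} (hw : w ∈ sphere x r) :
    f w ≤ ⨆ v : sphere x r, f v :=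
  le_ciSup (isCompact_range (hf.comp continuous_subtype_val)).bddAbove (⟨w, hw⟩ : sphere x r)

theorem stmt_15 (P : Polynomial ℂ) (n : ℕ) (hn : 0 < n) (hdeg : P.natDegree = n)
    (α : ℂ) (hα : 1 ≤ ‖α‖) (z : ℂ) (hz : 1 ≤ ‖z‖) :
    ‖(n : ℂ) * P.eval z + (α - z) * P.derivative.eval z‖ ≤
      (n : ℝ) * ‖α‖ * ‖z‖ ^ (n - 1) *
        ⨆ w : Metric.sphere (0 : ℂ) 1, ‖P.eval (w : ℂ)‖ := by
  subst hdeg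
  have hM (w : ℂ) (hw : ‖w‖ = 1) : ‖P.eval w‖ ≤ ⨆ w : sphere (0 : ℂ) 1, ‖P.eval (w : ℂ)‖ :=
    P.continuous.norm.le_iSup_sphere (mem_sphere_zero_iff_norm.mpr hw)
  have hcircle (w : ℂ) (hw : ‖w‖ = 1) := norm_eval_polarDerivative_le hM hn hα hw
  have := norm_eval_le_pow_mul hcircle (natDegree_polarDerivative_le α P) hz
  rw [eval_polarDerivative] at this
  exact this.trans_eq (by ring)
end
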